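/- arXiv:1603.02328 — 5 statements merged into one kernel-verified Lean document; each statement's English description precedes it below -/
import Mathlib

section
/- Let F be a free group of finite rank and let U = {u₁, …, u_m} be a finite subset of F. Then there exists a finite subset V of F that is Nielsen reduced, generates the same subgroup as U (⟨V⟩ = ⟨U⟩), and satisfies |V| ≤ m; in particular the subgroup ⟨U⟩ is free of rank at most m. -/
/-!
Nielsen's reduction argument. Read a reduced word as a base `|X × Bool| + 2` numeral whose last
letter is the most significant digit, and give `u` the weight `code u + code u⁻¹`; longer elements
are heavier. If a finite generating set `V` is not Nielsen reduced, it can be made strictly lighter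
without changing `⟨V⟩` or increasing `|V|`: drop `1` if it violates (N0); if `|v₁v₂| < |v₁|`
violates (N1), replace `v₁` by `v₁v₂`. If (N1) holds but (N2) fails for `v₁, v₂, v₃`, then the
cancellations in `v₁v₂` and `v₂v₃` each eat exactly half of `v₂ = pq`: `v₁ = a p⁻¹`,
`v₃ = q⁻¹ c`, `v₁v₂ = a q`, `v₂v₃ = p c`. Since `p ≠ q⁻¹`, either `q` has a smaller code than
`p⁻¹` and `v₁v₂` is lighter than `v₁`, or the other way round and `v₃⁻¹v₂⁻¹` is lighter than
`v₃⁻¹`. Hence a generating set of minimal total weight is Nielsen reduced.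

For the rank, `⟨U⟩` is free by Nielsen–Schreier, on a basis `T` say; abelianizing, `ℤ^(T)` is
spanned by the at most `m` images of `U`, so `|T| ≤ m`.
-/

/-- A subset `U` of a free group is *Nielsen reduced* if for all
`v₁, v₂, v₃ ∈ U ∪ U⁻¹` the conditions (N0), (N1), (N2) hold. -/
def NielsenReduced {X : Type*} [DecidableEq X] (U : Set (FreeGroup X)) : Prop :=
  ∀ v₁ ∈ U ∪ U⁻¹, ∀ v₂ ∈ U ∪ U⁻¹, ∀ v₃ ∈ U ∪ U⁻¹,
    v₁ ≠ 1 ∧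
    (v₁ * v₂ ≠ 1 → v₁.norm ≤ (v₁ * v₂).norm ∧ v₂.norm ≤ (v₁ * v₂).norm) ∧
    (v₁ * v₂ ≠ 1 → v₂ * v₃ ≠ 1 →
      (v₁.norm : ℤ) - (v₂.norm : ℤ) + (v₃.norm : ℤ) < ((v₁ * v₂ * v₃).norm : ℤ))

section WordCode

variable {β : Type*} [Fintype β]

-- The digits `1, …, |β|` are never `0`, so the code is injective and grows with the length.
noncomputable def wordCode (L : List β) : ℕ :=
  Nat.ofDigits (Fintype.card β + 2) (L.map fun b => Fintype.equivFin β b + 1)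

lemma wordCode_append (L₁ L₂ : List β) :
    wordCode (L₁ ++ L₂) = wordCode L₁ + (Fintype.card β + 2) ^ L₁.length * wordCode L₂ := by
  simp [wordCode, Nat.ofDigits_append]

lemma wordCode_digit_lt (L : List β) : ∀ d ∈ L.map (fun b => (Fintype.equivFin β b : ℕ) + 1),
    d < Fintype.card β + 2 := by
  simp only [List.mem_map]
  rintro _ ⟨b, -, rfl⟩
  have := (Fintype.equivFin β b).isLt
  omega

lemma wordCode_lt (L : List β) : wordCode L < (Fintype.card β + 2) ^ L.length := by
  simpa [wordCode] using Nat.ofDigits_lt_base_pow_length' (wordCode_digit_lt L)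

lemma pow_length_le_wordCode {L : List β} (hL : L ≠ []) :
    (Fintype.card β + 2) ^ L.length ≤ (Fintype.card β + 2) * wordCode L := by
  simpa [wordCode] using Nat.pow_length_le_mul_ofDigits (b := Fintype.card β)
    (List.map_eq_nil_iff.not.mpr hL) (by simp)

lemma wordCode_lt_wordCode_of_length_lt {L₁ L₂ : List β} (h : L₁.length < L₂.length) :
    wordCode L₁ < wordCode L₂ := by
  have hL₂ : L₂ ≠ [] := List.ne_nil_of_length_pos (by omega)
  refine Nat.lt_of_mul_lt_mul_left (a := Fintype.card β + 2) ?_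
  calc (Fintype.card β + 2) * wordCode L₁
      < (Fintype.card β + 2) * (Fintype.card β + 2) ^ L₁.length := by
        gcongr; exact wordCode_lt L₁
    _ = (Fintype.card β + 2) ^ (L₁.length + 1) := by ring
    _ ≤ (Fintype.card β + 2) ^ L₂.length := Nat.pow_le_pow_right (by omega) h
    _ ≤ (Fintype.card β + 2) * wordCode L₂ := pow_length_le_wordCode hL₂

lemma wordCode_injective : Function.Injective (wordCode (β := β)) := by
  intro L₁ L₂ h
  obtain hlt | heq | hgt := lt_trichotomy L₁.length L₂.length
  · exact absurd h (wordCode_lt_wordCode_of_length_lt hlt).ne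
  · refine List.map_injective_iff.mpr (fun b b' hb => ?_) <|
      Nat.ofDigits_inj_of_len_eq (by omega) (by simpa using heq) (wordCode_digit_lt L₁)
        (wordCode_digit_lt L₂) h
    exact (Fintype.equivFin β).injective (Fin.ext (by simpa using hb))
  · exact absurd h (wordCode_lt_wordCode_of_length_lt hgt).ne'

end WordCode

theorem Set.inv_mem_union_inv {G : Type*} [InvolutiveInv G] {s : Set G} {x : G}
    (h : x ∈ s ∪ s⁻¹) : x⁻¹ ∈ s ∪ s⁻¹ := by
  simp only [Set.mem_union, Set.mem_inv, inv_inv] at h ⊢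
  exact h.symm

namespace Subgroup

variable {G : Type*} [Group G] [DecidableEq G]

theorem mem_closure_erase_of_mem_union_inv {V : Finset G} {e g : G}
    (hg : g ∈ (V : Set G) ∪ (V : Set G)⁻¹) (hge : g ≠ e) (hge' : g ≠ e⁻¹) :
    g ∈ closure (V.erase e : Set G) := by
  rcases hg with hg | hg
  · exact subset_closure (Finset.mem_erase.mpr ⟨hge, hg⟩)
  · refine inv_mem_iff.mp (subset_closure (Finset.mem_erase.mpr ⟨?_, hg⟩))
    rintro rfl
    exact hge' (inv_inv g).symm

theorem closure_insert_erase_eq {V : Finset G} {e w : G} (hw : w ∈ closure (V : Set G))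
    (he : e ∈ closure (insert w (V.erase e) : Set G)) :
    closure (insert w (V.erase e) : Finset G) = closure (V : Set G) := by
  refine le_antisymm ((closure_le _).mpr ?_) ((closure_le _).mpr fun u hu => ?_)
  · rw [Finset.coe_insert, Set.insert_subset_iff]
    exact ⟨hw, (Finset.coe_subset.mpr (V.erase_subset e)).trans subset_closure⟩
  · rw [Finset.coe_insert]
    by_cases hue : u = e
    · exact hue ▸ he
    · exact subset_closure (Set.mem_insert_of_mem _ (Finset.mem_erase.mpr ⟨hue, hu⟩))

end Subgroup

namespace FreeGroup

variable {α : Type*} [DecidableEq α]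

theorem exists_reduce_append_eq {L₁ L₂ : List (α × Bool)} (h₁ : IsReduced L₁)
    (h₂ : IsReduced L₂) :
    ∃ a b c, L₁ = a ++ invRev c ∧ L₂ = c ++ b ∧ reduce (L₁ ++ L₂) = a ++ b := by
  induction L₁ using List.reverseRecOn generalizing L₂ with
  | nil => exact ⟨[], L₂, [], rfl, rfl, h₂.reduce_eq⟩
  | append_singleton l x ih =>
    rcases L₂ with _ | ⟨y, t⟩
    · exact ⟨l ++ [x], [], [], by simp [invRev], rfl, by simpa using h₁.reduce_eq⟩
    by_cases hxy : x = (y.1, !y.2)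
    · obtain ⟨a, b, c, rfl, rfl, hab⟩ :=
        ih (L₂ := t) (h₁.infix ⟨[], [x], rfl⟩) (h₂.infix ⟨[y], [], by simp⟩)
      refine ⟨a, b, y :: c, by simp [invRev, hxy], rfl, ?_⟩
      rw [← hab, hxy]
      refine reduce.Step.eq ?_
      simpa using Red.Step.not_rev (L₁ := a ++ invRev c) (L₂ := c ++ b) (x := y.1) (b := y.2)
    · refine ⟨l ++ [x], y :: t, [], by simp [invRev], rfl, ?_⟩
      refine IsReduced.reduce_eq ?_
      have hxy' : IsReduced ([x] ++ y :: t) := by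
        refine isReduced_cons_cons.mpr ⟨fun h => ?_, h₂⟩
        obtain ⟨x1, x2⟩ := x
        obtain ⟨y1, y2⟩ := y
        simp_all
      simpa using h₁.append_overlap hxy' (by simp)

theorem exists_toWord_mul_eq (x y : FreeGroup α) :
    ∃ a b c, x.toWord = a ++ invRev c ∧ y.toWord = c ++ b ∧ (x * y).toWord = a ++ b := by
  rw [toWord_mul]
  exact exists_reduce_append_eq isReduced_toWord isReduced_toWord

theorem eq_mk_of_toWord_eq {x : FreeGroup α} {L : List (α × Bool)} (h : x.toWord = L) :
    x = mk L := by rw [← h, mk_toWord]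

theorem norm_mul_mul_eq {x y z : FreeGroup α} {a p m s c : List (α × Bool)}
    (hx : x.toWord = a ++ invRev p) (hy : y.toWord = p ++ m ++ s) (hz : z.toWord = invRev s ++ c)
    (hxy : (x * y).toWord = a ++ m ++ s) (hyz : (y * z).toWord = p ++ m ++ c) (hm : m ≠ []) :
    (x * y * z).norm = a.length + m.length + c.length := by
  have hxyz : x * y * z = mk (a ++ m ++ c) := by
    simp only [eq_mk_of_toWord_eq hx, eq_mk_of_toWord_eq hy, eq_mk_of_toWord_eq hz,
      ← mul_mk, ← inv_mk]
    group
  have hred : IsReduced (a ++ m ++ c) :=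
    (isReduced_toWord.infix ⟨[], s, by rw [hxy]; simp⟩).append_overlap
      (isReduced_toWord.infix ⟨p, [], by rw [hyz]; simp⟩) hm
  rw [norm, hxyz, toWord_mk, hred.reduce_eq]
  simp only [List.length_append]

theorem exists_toWord_split_of_norm_mul_mul_le {x y z : FreeGroup α}
    (h₁ : x.norm ≤ (x * y).norm) (h₂ : y.norm ≤ (x * y).norm)
    (h₃ : y.norm ≤ (y * z).norm) (h₄ : z.norm ≤ (y * z).norm)
    (h : (x * y * z).norm + y.norm ≤ x.norm + z.norm) :
    ∃ a p q c, x.toWord = a ++ invRev p ∧ y.toWord = p ++ q ∧ z.toWord = invRev q ++ c ∧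
      (x * y).toWord = a ++ q ∧ (y * z).toWord = p ++ c ∧
      p.length = q.length ∧ q.length ≤ a.length ∧ p.length ≤ c.length := by
  obtain ⟨a, q, p, hx, hy, hxy⟩ := exists_toWord_mul_eq x y
  obtain ⟨d, c, r, hy', hz, hyz⟩ := exists_toWord_mul_eq y z
  have hpq : p ++ q = d ++ invRev r := hy.symm.trans hy'
  have hlen := congrArg List.length hpq
  simp only [norm, hx, hy, hz, hxy, hyz, List.length_append, invRev_length] at hlen h₁ h₂ h₃ h₄ h
  -- If the cancellations in `x * y` and `y * z` left a nonempty middle part `m` of `y`,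
  -- that part would survive in `x * y * z`.
  have hpd : p.length = d.length := by
    by_contra hne
    have hlt : p.length < d.length := by omega
    obtain ⟨m, rfl, rfl⟩ : ∃ m, d = p ++ m ∧ q = m ++ invRev r := by
      rcases List.append_eq_append_iff.mp hpq with h' | ⟨m, rfl, -⟩
      · exact h'
      · simp at hlt
    have hm : m ≠ [] := by rintro rfl; simp at hne
    have hxyz := norm_mul_mul_eq hx (by rw [hy, List.append_assoc]) (by rw [hz, invRev_invRev])
      (by rw [hxy, List.append_assoc]) hyz hm
    rw [norm] at hxyz
    simp only [List.length_append, invRev_length] at *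
    have := List.length_pos_iff.mpr hm
    omega
  obtain ⟨rfl, rfl⟩ := List.append_inj hpq hpd
  refine ⟨a, p, invRev r, c, hx, hy, by rw [hz, invRev_invRev], hxy, hyz, ?_, ?_, ?_⟩ <;>
    simp only [invRev_length] at * <;> omega

theorem norm_le_norm_mul_self (x : FreeGroup α) : x.norm ≤ (x * x).norm := by
  have h := congrArg List.length (reduceCyclically.conj_conjugator_reduceCyclically x.toWord)
  -- `x = c r c⁻¹` with `r` cyclically reduced, so `x * x = c r r c⁻¹` as reduced words.
  rw [← sq, norm, norm, toWord_pow, reduceCyclically.reduce_flatten_replicate isReduced_toWord]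
  simp only [List.length_append, invRev_length] at h
  simp only [← h, OfNat.ofNat_ne_zero, ↓reduceIte, List.reduceReplicate, List.flatten_cons,
    List.flatten_nil, List.append_nil, List.length_append, invRev_length]
  omega

variable [Fintype α]

noncomputable def weight (x : FreeGroup α) : ℕ := wordCode x.toWord + wordCode x⁻¹.toWord

theorem weight_inv (x : FreeGroup α) : weight x⁻¹ = weight x := by
  rw [weight, weight, inv_inv, add_comm]

theorem weight_lt_weight_of_norm_lt {x y : FreeGroup α} (h : x.norm < y.norm) :
    weight x < weight y := by
  have h' : x⁻¹.norm < y⁻¹.norm := by simpa only [norm_inv_eq] using h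
  exact Nat.add_lt_add (wordCode_lt_wordCode_of_length_lt h) (wordCode_lt_wordCode_of_length_lt h')

theorem weight_mul_lt_weight {x y : FreeGroup α} {a p q : List (α × Bool)}
    (hx : x.toWord = a ++ invRev p) (hxy : (x * y).toWord = a ++ q)
    (hpq : p.length = q.length) (hqa : q.length ≤ a.length)
    (hcode : wordCode q < wordCode (invRev p)) : weight (x * y) < weight x := by
  -- `x * y = a q` and `x = a p⁻¹` differ in the top digits, by at least `B ^ |a|`, while their
  -- inverses `q⁻¹ a⁻¹` and `p a⁻¹` differ only in the bottom `|q| ≤ |a|` digits.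
  rw [weight, weight, toWord_inv, toWord_inv, hxy, hx, invRev_append, invRev_append, invRev_invRev,
    wordCode_append, wordCode_append, wordCode_append, wordCode_append, invRev_length, hpq]
  set B := Fintype.card (α × Bool) + 2
  have hq : wordCode (invRev q) < B ^ a.length :=
    (wordCode_lt _).trans_le (Nat.pow_le_pow_right (by omega) (by simpa [invRev_length] using hqa))
  have hp : B ^ a.length * (wordCode q + 1) ≤ B ^ a.length * wordCode (invRev p) :=
    Nat.mul_le_mul_left _ hcode
  linarith

-- The `+ 1` makes dropping the trivial element, of weight `0`, a strict decrease.
noncomputable def totalWeight (V : Finset (FreeGroup α)) : ℕ := ∑ x ∈ V, (weight x + 1)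

def ReducingMove (V V' : Finset (FreeGroup α)) : Prop :=
  Subgroup.closure (V' : Set (FreeGroup α)) = Subgroup.closure V ∧ V'.card ≤ V.card ∧
    totalWeight V' < totalWeight V

variable {V : Finset (FreeGroup α)}

theorem reducingMove_erase_one (h : 1 ∈ V) :
    ReducingMove V (V.erase 1) := by
  refine ⟨?_, Finset.card_erase_le, ?_⟩
  · rw [Finset.coe_erase, Subgroup.closure_sdiff_one]
  · rw [totalWeight, totalWeight, ← Finset.sum_erase_add _ _ h]
    omega

theorem reducingMove_insert_erase {e w : FreeGroup α} (he : e ∈ V)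
    (hw : w ∈ Subgroup.closure (V : Set (FreeGroup α)))
    (he' : e ∈ Subgroup.closure (insert w (V.erase e) : Set (FreeGroup α)))
    (h : weight w < weight e) : ReducingMove V (insert w (V.erase e)) := by
  refine ⟨Subgroup.closure_insert_erase_eq hw he', ?_, ?_⟩
  · exact (Finset.card_insert_le _ _).trans (Finset.card_erase_add_one he).le
  · have hins : totalWeight (insert w (V.erase e)) ≤ weight w + 1 + totalWeight (V.erase e) := by
      by_cases hwV : w ∈ V.erase e
      · rw [Finset.insert_eq_of_mem hwV]; omega
      · rw [totalWeight, Finset.sum_insert hwV]; rfl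
    have hV : totalWeight V = totalWeight (V.erase e) + (weight e + 1) :=
      (Finset.sum_erase_add _ _ he).symm
    omega

theorem exists_reducingMove_of_weight_mul_lt {v g : FreeGroup α}
    (hv : v ∈ (V ∪ V⁻¹ : Set (FreeGroup α))) (hg : g ∈ (V ∪ V⁻¹ : Set (FreeGroup α)))
    (hgv : g ≠ v) (hgv' : g ≠ v⁻¹) (h : weight (v * g) < weight v) :
    ∃ V', ReducingMove V V' := by
  rcases hv with hv | hv
  · have hg' := Subgroup.mem_closure_erase_of_mem_union_inv hg hgv hgv'
    have hgV := Subgroup.closure_mono (Finset.coe_subset.mpr (V.erase_subset v)) hg'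
    refine ⟨_, reducingMove_insert_erase hv (mul_mem (Subgroup.subset_closure hv) hgV) ?_ h⟩
    simpa using mul_mem (Subgroup.subset_closure (Set.mem_insert (v * g) _))
      (inv_mem (Subgroup.closure_mono (Set.subset_insert _ _) hg'))
  · obtain ⟨e, he, rfl⟩ : ∃ e ∈ V, e⁻¹ = v := ⟨v⁻¹, hv, inv_inv v⟩
    rw [inv_inv] at hgv'
    have hg' := Subgroup.mem_closure_erase_of_mem_union_inv hg hgv' hgv
    have hgV := Subgroup.closure_mono (Finset.coe_subset.mpr (V.erase_subset e)) hg'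
    refine ⟨_, reducingMove_insert_erase (w := g⁻¹ * e) he
      (mul_mem (inv_mem hgV) (Subgroup.subset_closure he)) ?_ ?_⟩
    · simpa using mul_mem (Subgroup.closure_mono (Set.subset_insert _ _) hg')
        (Subgroup.subset_closure (Set.mem_insert (g⁻¹ * e) _))
    · rwa [← weight_inv e, ← weight_inv (g⁻¹ * e), mul_inv_rev, inv_inv]

theorem exists_reducingMove_of_norm_mul_lt {v g : FreeGroup α}
    (hv : v ∈ (V ∪ V⁻¹ : Set (FreeGroup α))) (hg : g ∈ (V ∪ V⁻¹ : Set (FreeGroup α)))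
    (hvg : v * g ≠ 1) (h : (v * g).norm < v.norm) : ∃ V', ReducingMove V V' := by
  refine exists_reducingMove_of_weight_mul_lt hv hg ?_ ?_ (weight_lt_weight_of_norm_lt h)
  · rintro rfl
    exact (norm_le_norm_mul_self g).not_gt h
  · rintro rfl
    exact hvg (mul_inv_cancel v)

theorem exists_reducingMove_of_norm_mul_mul_le {x y z : FreeGroup α}
    (hx : x ∈ (V ∪ V⁻¹ : Set (FreeGroup α))) (hy : y ∈ (V ∪ V⁻¹ : Set (FreeGroup α)))
    (hz : z ∈ (V ∪ V⁻¹ : Set (FreeGroup α))) (hy1 : y ≠ 1) (hxy : x * y ≠ 1) (hyz : y * z ≠ 1)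
    (hxy₁ : x.norm ≤ (x * y).norm) (hxy₂ : y.norm ≤ (x * y).norm)
    (hyz₁ : y.norm ≤ (y * z).norm) (hyz₂ : z.norm ≤ (y * z).norm)
    (h : (x * y * z).norm + y.norm ≤ x.norm + z.norm) : ∃ V', ReducingMove V V' := by
  obtain ⟨a, p, q, c, hxw, hyw, hzw, hxyw, hyzw, hpq, hqa, hpc⟩ :=
    exists_toWord_split_of_norm_mul_mul_le hxy₁ hxy₂ hyz₁ hyz₂ h
  have hqp : q ≠ invRev p := by
    rintro rfl
    exact hy1 (by rw [eq_mk_of_toWord_eq hyw, ← mul_mk, ← inv_mk, mul_inv_cancel])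
  rcases (wordCode_injective.ne hqp).lt_or_gt with hlt | hgt
  · refine exists_reducingMove_of_weight_mul_lt hx hy ?_ ?_
      (weight_mul_lt_weight hxw hxyw hpq hqa hlt)
    · rintro rfl
      have hlen := congrArg List.length (hyw.symm.trans hxw)
      simp only [List.length_append, invRev_length] at hlen
      exact hqp (List.append_inj (hyw.symm.trans hxw) (by omega)).2
    · rintro rfl
      exact hxy (mul_inv_cancel x)
  · refine exists_reducingMove_of_weight_mul_lt (Set.inv_mem_union_inv hz)
      (Set.inv_mem_union_inv hy) ?_ ?_ ?_
    · intro hyz'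
      rw [inv_inj] at hyz'
      subst hyz'
      have := (List.append_inj (hyw.symm.trans hzw) (by simpa [invRev_length] using hpq)).1
      exact hqp (by rw [this, invRev_invRev])
    · rintro hyz'
      rw [inv_inv] at hyz'
      subst hyz'
      exact hyz (mul_inv_cancel y)
    · refine weight_mul_lt_weight (a := invRev c) (p := invRev q) (q := invRev p) ?_ ?_ ?_ ?_ ?_
      · rw [toWord_inv, hzw, invRev_append, invRev_invRev]
      · rw [← mul_inv_rev, toWord_inv, hyzw, invRev_append]
      · simpa [invRev_length] using hpq.symm
      · simpa [invRev_length] using hpc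
      · rwa [invRev_invRev]

theorem nielsenReduced_of_forall_not_reducingMove (h : ∀ V', ¬ ReducingMove V V') :
    NielsenReduced (V : Set (FreeGroup α)) := by
  have hne : ∀ v ∈ (V ∪ V⁻¹ : Set (FreeGroup α)), v ≠ 1 := by
    rintro v hv rfl
    refine h _ (reducingMove_erase_one ?_)
    simpa using hv
  have hN1 : ∀ v ∈ (V ∪ V⁻¹ : Set (FreeGroup α)), ∀ g ∈ (V ∪ V⁻¹ : Set (FreeGroup α)),
      v * g ≠ 1 → v.norm ≤ (v * g).norm ∧ g.norm ≤ (v * g).norm := by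
    intro v hv g hg hvg
    constructor
    · by_contra! hlt
      obtain ⟨V', hV'⟩ := exists_reducingMove_of_norm_mul_lt hv hg hvg hlt
      exact h V' hV'
    · by_contra! hlt
      obtain ⟨V', hV'⟩ := exists_reducingMove_of_norm_mul_lt (Set.inv_mem_union_inv hg)
        (Set.inv_mem_union_inv hv) (by rwa [← mul_inv_rev, inv_ne_one])
        (by rwa [← mul_inv_rev, norm_inv_eq, norm_inv_eq])
      exact h V' hV'
  intro x hx y hy z hz
  refine ⟨hne x hx, hN1 x hx y hy, fun hxy hyz => ?_⟩
  by_contra! hfail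
  obtain ⟨V', hV'⟩ := exists_reducingMove_of_norm_mul_mul_le hx hy hz (hne y hy) hxy hyz
    (hN1 x hx y hy hxy).1 (hN1 x hx y hy hxy).2 (hN1 y hy z hz hyz).1 (hN1 y hy z hz hyz).2
    (by omega)
  exact h V' hV'

theorem exists_nielsenReduced_closure_eq (U : Finset (FreeGroup α)) :
    ∃ V : Finset (FreeGroup α), NielsenReduced (V : Set (FreeGroup α)) ∧
      Subgroup.closure (V : Set (FreeGroup α)) = Subgroup.closure U ∧ V.card ≤ U.card := by
  obtain ⟨V, ⟨hcl, hcard⟩, hmin⟩ := (measure totalWeight).wf.has_min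
    {V | Subgroup.closure (V : Set (FreeGroup α)) = Subgroup.closure U ∧ V.card ≤ U.card}
    ⟨U, by simp⟩
  refine ⟨V, nielsenReduced_of_forall_not_reducingMove ?_, hcl, hcard⟩
  rintro V' ⟨hcl', hcard', hlt⟩
  exact hmin V' ⟨hcl'.trans hcl, hcard'.trans hcard⟩ hlt

end FreeGroup

theorem IsFreeGroup.exists_mulEquiv_freeGroup_fin {G : Type*} [Group G] [IsFreeGroup G]
    (S : Finset G) (hS : Subgroup.closure (S : Set G) = ⊤) :
    ∃ n ≤ S.card, Nonempty (G ≃* FreeGroup (Fin n)) := by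
  classical
  let T := IsFreeGroup.Generators G
  let f : G →* Multiplicative (T →₀ ℤ) :=
    IsFreeGroup.lift fun t => Multiplicative.ofAdd (Finsupp.single t 1)
  let w : Finset (T →₀ ℤ) := S.image fun g => (f g).toAdd
  have hf (g : G) : (f g).toAdd ∈ Submodule.span ℤ (w : Set (T →₀ ℤ)) := by
    induction (hS ▸ Subgroup.mem_top g : g ∈ Subgroup.closure (S : Set G))
      using Subgroup.closure_induction with
    | mem g hg => exact Submodule.subset_span (Finset.mem_coe.mpr (Finset.mem_image_of_mem _ hg))
    | one => simp
    | mul g h _ _ hg hh => simpa using add_mem hg hh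
    | inv g _ hg => simpa using neg_mem hg
  have hspan : Submodule.span ℤ (w : Set (T →₀ ℤ)) = ⊤ := by
    rw [eq_top_iff, ← (Finsupp.basisSingleOne (R := ℤ) (ι := T)).span_eq, Submodule.span_le]
    rintro _ ⟨t, rfl⟩
    simpa [f] using hf (IsFreeGroup.of t)
  have hT := basis_le_span' Finsupp.basisSingleOne hspan
  have : Finite T := Cardinal.lt_aleph0_iff_finite.mp (hT.trans_lt Cardinal.natCast_lt_aleph0)
  have := Fintype.ofFinite T
  refine ⟨Fintype.card T, ?_, ⟨(IsFreeGroup.toFreeGroup G).trans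
    (FreeGroup.freeGroupCongr (Fintype.equivFin T))⟩⟩
  rw [Cardinal.mk_fintype, Nat.cast_le] at hT
  simp only [Finset.coe_sort_coe, Fintype.card_coe] at hT
  exact hT.trans Finset.card_image_le

theorem Subgroup.exists_mulEquiv_freeGroup_fin_closure {G : Type*} [Group G] (U : Finset G)
    [IsFreeGroup (closure (U : Set G))] :
    ∃ n ≤ U.card, Nonempty (closure (U : Set G) ≃* FreeGroup (Fin n)) := by
  let S : Finset (closure (U : Set G)) := U.preimage Subtype.val Subtype.val_injective.injOn
  obtain ⟨n, hn, e⟩ := IsFreeGroup.exists_mulEquiv_freeGroup_fin S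
    (by rw [Finset.coe_preimage, closure_closure_coe_preimage])
  have hS : S.card ≤ U.card :=
    Finset.card_le_card_of_injOn _ (fun _ h => Finset.mem_preimage.mp h) Subtype.val_injective.injOn
  exact ⟨n, hn.trans hS, e⟩

/-- Every finite subset `U` of a free group of finite rank can be carried into a
Nielsen reduced set `V` generating the same subgroup, with `|V| ≤ |U| = m`; in
particular `⟨U⟩` is free of rank at most `m`. -/
theorem exists_nielsenReduced_generating_same_subgroup
    {X : Type*} [Fintype X] [DecidableEq X] (m : ℕ)
    (U : Finset (FreeGroup X)) (hU : U.card = m) :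
    ∃ V : Finset (FreeGroup X),
      NielsenReduced (V : Set (FreeGroup X)) ∧
      Subgroup.closure (V : Set (FreeGroup X)) =
        Subgroup.closure (U : Set (FreeGroup X)) ∧
      V.card ≤ m ∧
      ∃ n : ℕ, n ≤ m ∧
        Nonempty (Subgroup.closure (U : Set (FreeGroup X)) ≃* FreeGroup (Fin n)) := by
  obtain ⟨V, hNR, hcl, hcard⟩ := FreeGroup.exists_nielsenReduced_closure_eq U
  exact ⟨V, hNR, hcl, hU ▸ hcard, hU ▸ Subgroup.exists_mulEquiv_freeGroup_fin_closure U⟩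
end

section
/- Let n = 2^m with m ≥ 1, let β, γ ∈ ℤ, and let h : ℤ_n → ℤ_n be the map x ↦ β̄x + γ̄, where β̄, γ̄ are the residues of β, γ modulo n. For α ∈ {0, 1, …, n−1} define the sequence x₁ = ᾱ, x_{i+1} = h(x_i). Then, for every choice of α, the sequence (x_i) is purely periodic with least period equal to n = 2^m if and only if the following three conditions hold: (1) β is odd; (2) if m ≥ 2 then β ≡ 1 (mod 4); (3) γ is odd. -/
open Finset

/-- A sequence `x` is purely periodic with least period `p` if `p` is the smallest
positive integer such that `x (i + p) = x i` for all `i`. -/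
def IsLeastPeriod {α : Type*} (x : ℕ → α) (p : ℕ) : Prop :=
  0 < p ∧ (∀ i, x (i + p) = x i) ∧
    ∀ p' : ℕ, 0 < p' → (∀ i, x (i + p') = x i) → p ≤ p'

private lemma lcg_isLeastPeriod_iter {T : Type*} (f : T → T) (a : T) (n : ℕ) :
    IsLeastPeriod (fun i => f^[i] a) n ↔
      (0 < n ∧ f^[n] a = a ∧ ∀ q : ℕ, 0 < q → f^[q] a = a → n ≤ q) := by
  have key : ∀ p : ℕ, (∀ i, f^[i + p] a = f^[i] a) ↔ f^[p] a = a := by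
    intro p
    constructor
    · intro h; simpa using h 0
    · intro h i; rw [Function.iterate_add_apply, h]
  unfold IsLeastPeriod
  simp only [key]

private lemma lcg_iter_affine {R : Type*} [CommRing R] (b c x : R) (p : ℕ) :
    (fun y => b * y + c)^[p] x = b ^ p * x + c * ∑ j ∈ range p, b ^ j := by
  induction p with
  | zero => simp
  | succ p ih => rw [Function.iterate_succ_apply', ih, geom_sum_succ]; ring

private lemma lcg_sum_double (b : ℤ) (a : ℕ) :
    ∑ j ∈ range (2 * a), b ^ j = (1 + b ^ a) * ∑ j ∈ range a, b ^ j := by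
  rw [two_mul, Finset.sum_range_add]
  simp only [pow_add, ← Finset.mul_sum]
  ring

private lemma lcg_cast2 (b : ℤ) (hb : b % 2 = 1) (q : ℕ) :
    ((∑ j ∈ range q, b ^ j : ℤ) : ZMod 2) = (q : ZMod 2) := by
  have hb2 : (b : ZMod 2) = 1 := by
    have : b ≡ 1 [ZMOD 2] := by unfold Int.ModEq; omega
    exact_mod_cast (ZMod.intCast_eq_intCast_iff _ _ _).mpr this
  push_cast
  simp [hb2]

private lemma lcg_odd_sum (b : ℤ) (hb : b % 2 = 1) (q : ℕ) (hq : q % 2 = 1) :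
    (∑ j ∈ range q, b ^ j) % 2 = 1 := by
  have h0 := lcg_cast2 b hb q
  have hq2 : (q : ZMod 2) = 1 := by
    have : ((q % 2 : ℕ) : ZMod 2) = (q : ZMod 2) := ZMod.natCast_mod q 2 ▸ rfl
    rw [← this, hq]; rfl
  rw [hq2] at h0
  have : ¬ ((2:ℤ) ∣ ∑ j ∈ range q, b ^ j) := by
    intro hd
    rw [show ((2:ℤ)) = ((2:ℕ):ℤ) from rfl, ← ZMod.intCast_zmod_eq_zero_iff_dvd, h0] at hd
    exact one_ne_zero hd
  omega

private lemma lcg_val (b : ℤ) (hb : b % 4 = 1) (q : ℕ) (hq : q % 2 = 1) (k : ℕ) :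
    ∃ u : ℤ, u % 2 = 1 ∧ ∑ j ∈ range (2 ^ k * q), b ^ j = 2 ^ k * u := by
  induction k with
  | zero => exact ⟨_, lcg_odd_sum b (by omega) q hq, by simp⟩
  | succ k ih =>
    obtain ⟨u, hu, hsum⟩ := ih
    have hpow : b ^ (2 ^ k * q) % 4 = 1 := by
      have : b ^ (2 ^ k * q) ≡ 1 ^ (2 ^ k * q) [ZMOD 4] :=
        Int.ModEq.pow _ (by unfold Int.ModEq; omega)
      simpa [Int.ModEq] using this
    obtain ⟨w, hw, hwodd⟩ : ∃ w : ℤ, 1 + b ^ (2 ^ k * q) = 2 * w ∧ w % 2 = 1 :=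
      ⟨(1 + b ^ (2 ^ k * q)) / 2, by omega, by omega⟩
    refine ⟨w * u, ?_, ?_⟩
    · exact Int.odd_iff.mp ((Int.odd_iff.mpr hwodd).mul (Int.odd_iff.mpr hu))
    · rw [show 2 ^ (k+1) * q = 2 * (2 ^ k * q) by ring, lcg_sum_double, hsum, hw]
      ring

private lemma lcg_A (b : ℤ) (hb : b % 2 = 1) (k : ℕ) :
    (2 ^ k : ℤ) ∣ ∑ j ∈ range (2 ^ k), b ^ j := by
  induction k with
  | zero => simp
  | succ k ih =>
    have h2 : (2:ℕ) ^ (k + 1) = 2 * 2 ^ k := by ring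
    rw [h2, lcg_sum_double]
    have hpow : b ^ (2 ^ k) % 2 = 1 := by
      have : b ^ (2 ^ k) ≡ 1 ^ (2 ^ k) [ZMOD 2] :=
        Int.ModEq.pow _ (by unfold Int.ModEq; omega)
      simpa [Int.ModEq] using this
    have hd : (2:ℤ) ∣ 1 + b ^ (2 ^ k) := by omega
    calc (2 ^ (k+1) : ℤ) = 2 * 2 ^ k := by ring
    _ ∣ (1 + b ^ (2 ^ k)) * ∑ j ∈ range (2 ^ k), b ^ j := mul_dvd_mul hd ih

private lemma lcg_B (b : ℤ) (hb : b % 4 = 3) (k : ℕ) (hk : 1 ≤ k) :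
    (2 ^ (k + 1) : ℤ) ∣ ∑ j ∈ range (2 ^ k), b ^ j := by
  induction k with
  | zero => omega
  | succ k ih =>
    rcases Nat.eq_or_lt_of_le hk with h1 | h1
    · rw [← h1]
      norm_num [Finset.sum_range_succ]
      omega
    · have hk' : 1 ≤ k := by omega
      have h2 : (2:ℕ) ^ (k + 1) = 2 * 2 ^ k := by ring
      rw [h2, lcg_sum_double]
      have hpow : b ^ (2 ^ k) % 2 = 1 := by
        have : b ^ (2 ^ k) ≡ 1 ^ (2 ^ k) [ZMOD 2] :=
          Int.ModEq.pow _ (by unfold Int.ModEq; omega)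
        simpa [Int.ModEq] using this
      have hd : (2:ℤ) ∣ 1 + b ^ (2 ^ k) := by omega
      calc (2 ^ (k+1+1) : ℤ) = 2 * 2 ^ (k+1) := by ring
      _ ∣ (1 + b ^ (2 ^ k)) * ∑ j ∈ range (2 ^ k), b ^ j := mul_dvd_mul hd (ih hk')

private lemma lcg_dvd (m k : ℕ) (u : ℤ) (hu : u % 2 = 1) :
    (2 ^ m : ℤ) ∣ 2 ^ k * u ↔ m ≤ k := by
  constructor
  · intro h
    by_contra hlt
    push_neg at hlt
    have h1 : (2 ^ (k + 1) : ℤ) ∣ 2 ^ k * u := dvd_trans (pow_dvd_pow 2 (by omega)) h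
    have h2 : (2 ^ k : ℤ) * 2 ∣ 2 ^ k * u := by rw [← pow_succ]; exact h1
    have : (2:ℤ) ∣ u := (mul_dvd_mul_iff_left (a := (2:ℤ)^k) (by positivity)).mp h2
    omega
  · intro h
    exact Dvd.dvd.mul_right (pow_dvd_pow 2 h) u

private lemma lcg_unit (N : ℕ) (z : ℤ) (hz : z % 2 = 1) : IsUnit ((z : ℤ) : ZMod (2 ^ N)) := by
  have h1 : IsCoprime (2 : ℤ) z := (Int.prime_two.coprime_iff_not_dvd).mpr (by omega)
  have h2 : IsCoprime ((2:ℤ) ^ N) z := h1.pow_left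
  have h3 := h2.map (Int.castRingHom (ZMod (2 ^ N)))
  have h4 : (Int.castRingHom (ZMod (2 ^ N))) ((2:ℤ)^N) = 0 := by
    show (((2:ℤ)^N : ℤ) : ZMod (2^N)) = 0
    rw [show (((2:ℤ) ^ N : ℤ) : ZMod (2^N)) = (((2^N : ℕ) : ℤ) : ZMod (2^N)) by push_cast; ring]
    rw [ZMod.intCast_zmod_eq_zero_iff_dvd]
  rw [h4] at h3
  exact isCoprime_zero_left.mp h3

private lemma lcg_main_dvd (m : ℕ) (hm : 1 ≤ m) (b : ℤ) (hb : b % 2 = 1)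
    (hb4 : 2 ≤ m → b % 4 = 1) (q : ℕ) :
    ((2 ^ m : ℕ) : ℤ) ∣ ∑ j ∈ range q, b ^ j ↔ 2 ^ m ∣ q := by
  rcases Nat.eq_zero_or_pos q with rfl | hq
  · simp
  rcases Nat.lt_or_ge m 2 with hm1 | hm2
  · have hm' : m = 1 := by omega
    subst hm'
    constructor
    · intro h
      have h2 : ((∑ j ∈ range q, b ^ j : ℤ) : ZMod 2) = 0 := by
        rw [ZMod.intCast_zmod_eq_zero_iff_dvd]
        exact_mod_cast h
      rw [lcg_cast2 b hb q] at h2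
      have := (ZMod.natCast_eq_zero_iff q 2).mp h2
      simpa using this
    · intro h
      have h3 : ((∑ j ∈ range q, b ^ j : ℤ) : ZMod 2) = 0 := by
        rw [lcg_cast2 b hb q, ZMod.natCast_eq_zero_iff]
        simpa using h
      rw [ZMod.intCast_zmod_eq_zero_iff_dvd] at h3
      simpa using h3
  · obtain ⟨k, r, hr2, hqe⟩ :=
      Nat.exists_eq_pow_mul_and_not_dvd (by omega : q ≠ 0) 2 (by norm_num)
    subst hqe
    obtain ⟨u, hu, hsum⟩ := lcg_val b (hb4 hm2) r (by omega) k
    rw [hsum]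
    rw [show ((2^m : ℕ) : ℤ) = (2:ℤ)^m by push_cast; ring]
    rw [lcg_dvd m k u hu]
    constructor
    · intro h
      exact Dvd.dvd.mul_right (pow_dvd_pow 2 h) r
    · intro h
      have h2 : ((2:ℤ)) ^ m ∣ (2:ℤ)^k * (r : ℤ) := by
        rw [show ((2:ℤ)^k * (r:ℤ)) = (((2^k * r : ℕ)) : ℤ) by push_cast; ring]
        exact_mod_cast Int.natCast_dvd_natCast.mpr (by exact_mod_cast h)
      exact (lcg_dvd m k (r:ℤ) (by omega)).mp h2

/-- Maximal period length for the linear congruence generator `x ↦ β̄x + γ̄` on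
`ℤ/2^m`: for every starting value `α`, the orbit sequence is purely periodic with
least period `2^m` if and only if `β` is odd, `β ≡ 1 (mod 4)` whenever `m ≥ 2`,
and `γ` is odd. -/
theorem lcg_maximal_period_iff (m : ℕ) (hm : 1 ≤ m) (β γ : ℤ) :
    (∀ α : ZMod (2 ^ m),
      IsLeastPeriod
        (fun i => (fun x : ZMod (2 ^ m) => (β : ZMod (2 ^ m)) * x + (γ : ZMod (2 ^ m)))^[i] α)
        (2 ^ m)) ↔
    (Odd β ∧ (2 ≤ m → β ≡ 1 [ZMOD 4]) ∧ Odd γ) := by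
  haveI : NeZero (2 ^ m) := ⟨by positivity⟩
  set b : ZMod (2 ^ m) := (β : ZMod (2 ^ m)) with hbdef
  set c : ZMod (2 ^ m) := (γ : ZMod (2 ^ m)) with hcdef
  have hn2 : 2 ≤ 2 ^ m := by
    calc 2 = 2 ^ 1 := by norm_num
    _ ≤ 2 ^ m := Nat.pow_le_pow_right (by norm_num) hm
  have hcastS : ∀ q : ℕ, ((∑ j ∈ range q, β ^ j : ℤ) : ZMod (2 ^ m)) = ∑ j ∈ range q, b ^ j := by
    intro q; push_cast; rfl
  have hiter : ∀ (x : ZMod (2 ^ m)) (p : ℕ),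
      (fun x => b * x + c)^[p] x = b ^ p * x + c * ∑ j ∈ range p, b ^ j :=
    fun x p => lcg_iter_affine b c x p
  constructor
  · -- hypothesis → conditions
    intro H
    have H' : ∀ α : ZMod (2 ^ m), (fun x => b * x + c)^[2 ^ m] α = α ∧
        ∀ q : ℕ, 0 < q → (fun x => b * x + c)^[q] α = α → 2 ^ m ≤ q := by
      intro α
      have := (lcg_isLeastPeriod_iter (fun x => b * x + c) α (2 ^ m)).mp (H α)
      exact ⟨this.2.1, this.2.2⟩
    have hβodd : Odd β := by
      by_contra hodd
      rw [Int.not_odd_iff_even] at hodd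
      obtain ⟨t, ht⟩ := hodd
      have hb0 : b ^ m = 0 := by
        rw [hbdef, show ((β : ZMod (2^m)) ^ m) = ((β ^ m : ℤ) : ZMod (2^m)) by push_cast; ring]
        rw [ZMod.intCast_zmod_eq_zero_iff_dvd]
        refine ⟨t ^ m, ?_⟩
        rw [show β = 2 * t by omega]
        push_cast
        ring
      have key1 : (fun x => b * x + c)^[m + 1] (0 : ZMod (2^m)) =
          (fun x => b * x + c)^[m] 0 := by
        rw [Function.iterate_succ_apply, hiter, hiter, hb0]
        ring
      have hmul : ∀ k : ℕ, (fun x => b * x + c)^[k * 2 ^ m] (0 : ZMod (2^m)) = 0 := by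
        intro k
        induction k with
        | zero => simp
        | succ k ih =>
          rw [Nat.succ_mul, Function.iterate_add_apply, (H' 0).1, ih]
      obtain ⟨t', ht'⟩ : ∃ t', m + t' = m * 2 ^ m :=
        ⟨m * 2 ^ m - m, by
          have : m ≤ m * 2 ^ m := Nat.le_mul_of_pos_right m (by positivity)
          omega⟩
      have key2 : (fun x => b * x + c)^[1] (0 : ZMod (2^m)) = 0 := by
        have h5 := congrArg ((fun x : ZMod (2^m) => b * x + c)^[t']) key1
        rw [← Function.iterate_add_apply, ← Function.iterate_add_apply] at h5
        rw [show t' + (m + 1) = 1 + m * 2 ^ m by omega,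
            show t' + m = m * 2 ^ m by omega] at h5
        rw [Function.iterate_add_apply, hmul m] at h5
        exact h5
      have := (H' 0).2 1 (by norm_num) key2
      omega
    have hb2 : β % 2 = 1 := Int.odd_iff.mp hβodd
    have hlt : 2 ^ (m - 1) < 2 ^ m := Nat.pow_lt_pow_right (by norm_num) (by omega)
    have hfix_of_dvd : ∀ d : ℤ,
        ((2 ^ m : ℕ) : ℤ) ∣ γ * d →
        (((γ * d : ℤ)) : ZMod (2^m)) = 0 := by
      intro d hd
      rw [ZMod.intCast_zmod_eq_zero_iff_dvd]
      exact hd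
    have horbit0 : ∀ p : ℕ,
        (fun x => b * x + c)^[p] (0 : ZMod (2^m)) =
          ((γ * ∑ j ∈ range p, β ^ j : ℤ) : ZMod (2^m)) := by
      intro p
      rw [hiter]
      push_cast
      ring
    have hγodd : Odd γ := by
      by_contra hodd
      rw [Int.not_odd_iff_even] at hodd
      obtain ⟨g, hg⟩ := hodd
      have hfix : (fun x => b * x + c)^[2 ^ (m-1)] (0 : ZMod (2^m)) = 0 := by
        rw [horbit0]
        apply hfix_of_dvd
        have h1 : (2:ℤ) ^ (m - 1) ∣ ∑ j ∈ range (2 ^ (m-1)), β ^ j := lcg_A β hb2 (m-1)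
        have h2 : (2:ℤ) ∣ γ := ⟨g, by omega⟩
        have h3 : ((2 ^ m : ℕ) : ℤ) = 2 * 2 ^ (m - 1) := by
          push_cast
          rw [← pow_succ']
          congr 1
          omega
        rw [h3]
        exact mul_dvd_mul h2 h1
      have := (H' 0).2 (2 ^ (m-1)) (by positivity) hfix
      omega
    refine ⟨hβodd, ?_, hγodd⟩
    intro hm2
    by_contra h4
    have hβ4 : β % 4 = 3 := by
      unfold Int.ModEq at h4
      omega
    have hfix : (fun x => b * x + c)^[2 ^ (m-1)] (0 : ZMod (2^m)) = 0 := by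
      rw [horbit0]
      apply hfix_of_dvd
      have h1 : (2:ℤ) ^ ((m - 1) + 1) ∣ ∑ j ∈ range (2 ^ (m-1)), β ^ j :=
        lcg_B β hβ4 (m-1) (by omega)
      have h3 : ((2 ^ m : ℕ) : ℤ) = 2 ^ ((m - 1) + 1) := by
        push_cast
        congr 1
        omega
      rw [h3]
      exact Dvd.dvd.mul_left h1 γ
    have := (H' 0).2 (2 ^ (m-1)) (by positivity) hfix
    omega
  · -- conditions → hypothesis
    rintro ⟨hβ, hβ4, hγ⟩ α
    have hb2 : β % 2 = 1 := Int.odd_iff.mp hβ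
    have hb4 : 2 ≤ m → β % 4 = 1 := by
      intro h
      have := hβ4 h
      unfold Int.ModEq at this
      omega
    have hg2 : γ % 2 = 1 := Int.odd_iff.mp hγ
    rw [lcg_isLeastPeriod_iter]
    have key : ∀ q : ℕ, (fun x => b * x + c)^[q] α = α ↔ 2 ^ m ∣ q := by
      intro q
      rw [hiter, ← sub_eq_zero]
      have hz : IsUnit ((b - 1) * α + c) := by
        have hzcast : (((β - 1) * (α.val : ℤ) + γ : ℤ) : ZMod (2^m)) = (b - 1) * α + c := by
          push_cast
          rw [ZMod.natCast_val, ZMod.cast_id]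
        have hzodd : ((β - 1) * (α.val : ℤ) + γ) % 2 = 1 := by
          have h1 : Even ((β - 1) * (α.val : ℤ)) :=
            (Int.even_iff.mpr (by omega)).mul_right _
          exact Int.odd_iff.mp (h1.add_odd hγ)
        rw [← hzcast]
        exact lcg_unit m _ hzodd
      have hident : b ^ q * α + c * (∑ j ∈ range q, b ^ j) - α =
          (∑ j ∈ range q, b ^ j) * ((b - 1) * α + c) := by
        linear_combination -α * geom_sum_mul b q
      rw [hident, IsUnit.mul_left_eq_zero hz, ← hcastS, ZMod.intCast_zmod_eq_zero_iff_dvd]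
      exact lcg_main_dvd m hm β hb2 hb4 q
    exact ⟨by positivity, (key _).mpr dvd_rfl, fun q hq hfix => Nat.le_of_dvd hq ((key q).mp hfix)⟩
end

section
/- Let (r_j)_{j≥1} be a sequence of rational numbers with r₁ ≥ 2 and r_{j+1} − r_j ≥ 3 for all j. For each j define the matrix M_j = [[−r_j, −1 + r_j²], [1, −r_j]] ∈ SL(2, ℚ). Then the matrices M₁, M₂, … freely generate a free group: the group homomorphism from the free group on countably many generators x₁, x₂, … to SL(2, ℚ) determined by x_j ↦ M_j is injective, so the subgroup generated by {M₁, M₂, …} is free with basis {M₁, M₂, …}. -/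
open Matrix


/-- The matrix `M j = [[−r j, −1 + (r j)²], [1, −r j]]` as an element of `SL(2,ℚ)`. -/
def lehnerMatrix (r : ℕ → ℚ) (j : ℕ) : Matrix.SpecialLinearGroup (Fin 2) ℚ :=
  ⟨!![-r j, -1 + (r j) ^ 2; 1, -r j], by simp [Matrix.det_fin_two_of]; ring⟩

/-- Nonzero vectors in ℚ². -/
abbrev LehnerV : Type := {v : Fin 2 → ℚ // v ≠ 0}

noncomputable instance : MulAction (Matrix.SpecialLinearGroup (Fin 2) ℚ) LehnerV where
  smul g v := ⟨(g : Matrix (Fin 2) (Fin 2) ℚ) *ᵥ v.1, by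
    intro h
    apply v.2
    have : ((g⁻¹ : Matrix.SpecialLinearGroup (Fin 2) ℚ) : Matrix (Fin 2) (Fin 2) ℚ) *ᵥ
        ((g : Matrix (Fin 2) (Fin 2) ℚ) *ᵥ v.1) = 0 := by rw [h, Matrix.mulVec_zero]
    rw [Matrix.mulVec_mulVec, ← Matrix.SpecialLinearGroup.coe_mul, inv_mul_cancel] at this
    simpa using this⟩
  one_smul v := by
    apply Subtype.ext
    show ((1 : Matrix.SpecialLinearGroup (Fin 2) ℚ) : Matrix (Fin 2) (Fin 2) ℚ) *ᵥ v.1 = v.1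
    simp
  mul_smul g h v := by
    apply Subtype.ext
    show ((g * h : Matrix.SpecialLinearGroup (Fin 2) ℚ) : Matrix (Fin 2) (Fin 2) ℚ) *ᵥ v.1 = _
    rw [Matrix.SpecialLinearGroup.coe_mul, ← Matrix.mulVec_mulVec]
    rfl

theorem lehner_smul_def (g : Matrix.SpecialLinearGroup (Fin 2) ℚ) (v : LehnerV) :
    (g • v).1 = (g : Matrix (Fin 2) (Fin 2) ℚ) *ᵥ v.1 := rfl

theorem lehner_r_mono (r : ℕ → ℚ) (hr : ∀ j, r j + 3 ≤ r (j + 1)) :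
    ∀ i j : ℕ, i < j → r i + 3 ≤ r j := by
  intro i j hij
  induction j with
  | zero => omega
  | succ n ih =>
    rcases Nat.lt_succ_iff_lt_or_eq.mp hij with h | h
    · have := ih h
      have := hr n
      linarith
    · subst h; exact hr i

theorem lehner_r_ge (r : ℕ → ℚ) (hr1 : 2 ≤ r 0) (hr : ∀ j, r j + 3 ≤ r (j + 1)) :
    ∀ j, 2 ≤ r j := by
  intro j
  cases j with
  | zero => exact hr1
  | succ n =>
    have := lehner_r_mono r hr 0 (n + 1) (Nat.succ_pos n)
    linarith

theorem lehner_vec_ne (v : LehnerV) (h : v.1 1 = 0) : v.1 0 ≠ 0 := by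
  intro h0
  apply v.2
  funext i
  fin_cases i <;> simpa [h0, h]

/-- If `r 0 ≥ 2` and `r (j+1) − r j ≥ 3` for all `j`, then the matrices
`M j = [[−r j, −1 + (r j)²], [1, −r j]] ∈ SL(2,ℚ)` freely generate a free group:
the homomorphism from the free group on countably many generators sending the
`j`-th generator to `M j` is injective. -/
theorem matrices_generate_free_group (r : ℕ → ℚ)
    (hr1 : 2 ≤ r 0) (hr : ∀ j, r j + 3 ≤ r (j + 1)) :
    Function.Injective ⇑(FreeGroup.lift (lehnerMatrix r)) := by
  have hge := lehner_r_ge r hr1 hr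
  have hmono := lehner_r_mono r hr
  -- distance between distinct r's is at least 3
  have hdist : ∀ i j : ℕ, i ≠ j → 3 ≤ |r i - r j| := by
    intro i j hij
    rcases Nat.lt_or_ge i j with h | h
    · have := hmono i j h
      rw [abs_sub_comm, abs_of_nonneg (by linarith)]; linarith
    · have hlt : j < i := lt_of_le_of_ne h (Ne.symm hij)
      have := hmono j i hlt
      rw [abs_of_nonneg (by linarith)]; linarith
  set X : ℕ → Set LehnerV := fun i => {v | |v.1 0 + r i * v.1 1| ≤ |v.1 1|} with hXdef
  set Y : ℕ → Set LehnerV := fun i => {v | |v.1 0 - r i * v.1 1| ≤ |v.1 1|} with hYdef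
  -- a vector in X i or Y i has nonzero second coordinate
  have hXne : ∀ i (v : LehnerV), v ∈ X i → v.1 1 ≠ 0 := by
    intro i v hv h1
    apply lehner_vec_ne v h1
    have : |v.1 0 + r i * v.1 1| ≤ |v.1 1| := hv
    rw [h1] at this
    simpa using this
  have hYne : ∀ i (v : LehnerV), v ∈ Y i → v.1 1 ≠ 0 := by
    intro i v hv h1
    apply lehner_vec_ne v h1
    have : |v.1 0 - r i * v.1 1| ≤ |v.1 1| := hv
    rw [h1] at this
    simpa using this
  apply FreeGroup.injective_lift_of_ping_pong (lehnerMatrix r) X Y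
  · -- nonempty
    intro i
    refine ⟨⟨![-r i, 1], ?_⟩, ?_⟩
    · intro h
      have := congrFun h 1
      simp at this
    · show |(![-r i, 1] : Fin 2 → ℚ) 0 + r i * (![-r i, 1] : Fin 2 → ℚ) 1| ≤ _
      norm_num
  · -- X pairwise disjoint
    intro i j hij
    show Disjoint (X i) (X j)
    rw [Set.disjoint_left]
    intro v hvi hvj
    have h1 : v.1 1 ≠ 0 := hXne i v hvi
    have e1 : |v.1 0 + r i * v.1 1| ≤ |v.1 1| := hvi
    have e2 : |v.1 0 + r j * v.1 1| ≤ |v.1 1| := hvj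
    have key : |r i - r j| * |v.1 1| ≤ 2 * |v.1 1| := by
      rw [← abs_mul]
      calc |(r i - r j) * v.1 1| = |(v.1 0 + r i * v.1 1) - (v.1 0 + r j * v.1 1)| := by
            ring_nf
      _ ≤ |v.1 0 + r i * v.1 1| + |v.1 0 + r j * v.1 1| := abs_sub _ _
      _ ≤ 2 * |v.1 1| := by linarith
    have h3 : 3 ≤ |r i - r j| := hdist i j hij
    have hpos : 0 < |v.1 1| := abs_pos.mpr h1
    nlinarith
  · -- Y pairwise disjoint
    intro i j hij
    show Disjoint (Y i) (Y j)
    rw [Set.disjoint_left]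
    intro v hvi hvj
    have h1 : v.1 1 ≠ 0 := hYne i v hvi
    have e1 : |v.1 0 - r i * v.1 1| ≤ |v.1 1| := hvi
    have e2 : |v.1 0 - r j * v.1 1| ≤ |v.1 1| := hvj
    have key : |r i - r j| * |v.1 1| ≤ 2 * |v.1 1| := by
      rw [← abs_mul]
      calc |(r i - r j) * v.1 1| = |(v.1 0 - r j * v.1 1) - (v.1 0 - r i * v.1 1)| := by
            ring_nf
      _ ≤ |v.1 0 - r j * v.1 1| + |v.1 0 - r i * v.1 1| := abs_sub _ _
      _ ≤ 2 * |v.1 1| := by linarith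
    have h3 : 3 ≤ |r i - r j| := hdist i j hij
    have hpos : 0 < |v.1 1| := abs_pos.mpr h1
    nlinarith
  · -- X and Y disjoint
    intro i j
    rw [Set.disjoint_left]
    intro v hvi hvj
    have h1 : v.1 1 ≠ 0 := hXne i v hvi
    have e1 : |v.1 0 + r i * v.1 1| ≤ |v.1 1| := hvi
    have e2 : |v.1 0 - r j * v.1 1| ≤ |v.1 1| := hvj
    have key : (r i + r j) * |v.1 1| ≤ 2 * |v.1 1| := by
      have : |(r i + r j) * v.1 1| ≤ 2 * |v.1 1| := by
        calc |(r i + r j) * v.1 1| = |(v.1 0 + r i * v.1 1) - (v.1 0 - r j * v.1 1)| := by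
              ring_nf
        _ ≤ |v.1 0 + r i * v.1 1| + |v.1 0 - r j * v.1 1| := abs_sub _ _
        _ ≤ 2 * |v.1 1| := by linarith
      calc (r i + r j) * |v.1 1| ≤ |(r i + r j) * v.1 1| := by
            rw [abs_mul]
            exact mul_le_mul_of_nonneg_right (le_abs_self _) (abs_nonneg _)
      _ ≤ 2 * |v.1 1| := this
    have hi := hge i
    have hj := hge j
    have hpos : 0 < |v.1 1| := abs_pos.mpr h1
    nlinarith
  · -- M i maps complement of Y i into X i
    intro i
    rintro w ⟨v, hv, rfl⟩
    have hv' : ¬ (|v.1 0 - r i * v.1 1| ≤ |v.1 1|) := hv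
    push_neg at hv'
    show |((lehnerMatrix r i) • v).1 0 + r i * ((lehnerMatrix r i) • v).1 1| ≤
      |((lehnerMatrix r i) • v).1 1|
    rw [lehner_smul_def]
    have h0 : ((lehnerMatrix r i : Matrix (Fin 2) (Fin 2) ℚ) *ᵥ v.1) 0
        = -r i * v.1 0 + (-1 + (r i)^2) * v.1 1 := by
      simp [lehnerMatrix, Matrix.mulVec, dotProduct, Fin.sum_univ_two]
    have h1 : ((lehnerMatrix r i : Matrix (Fin 2) (Fin 2) ℚ) *ᵥ v.1) 1
        = v.1 0 - r i * v.1 1 := by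
      simp [lehnerMatrix, Matrix.mulVec, dotProduct, Fin.sum_univ_two]
      ring
    rw [h0, h1]
    have key : -r i * v.1 0 + (-1 + (r i)^2) * v.1 1 + r i * (v.1 0 - r i * v.1 1)
        = -v.1 1 := by ring
    rw [key, abs_neg]
    exact le_of_lt hv'
  · -- M i ⁻¹ maps complement of X i into Y i
    intro i
    rintro w ⟨v, hv, rfl⟩
    have hv' : ¬ (|v.1 0 + r i * v.1 1| ≤ |v.1 1|) := hv
    push_neg at hv'
    show |(((lehnerMatrix r i)⁻¹) • v).1 0 - r i * (((lehnerMatrix r i)⁻¹) • v).1 1| ≤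
      |(((lehnerMatrix r i)⁻¹) • v).1 1|
    rw [lehner_smul_def]
    have hinv : (((lehnerMatrix r i)⁻¹ : Matrix.SpecialLinearGroup (Fin 2) ℚ) : Matrix (Fin 2) (Fin 2) ℚ)
        = !![-r i, 1 - (r i)^2; -1, -r i] := by
      rw [Matrix.SpecialLinearGroup.coe_inv]
      show Matrix.adjugate !![-r i, -1 + (r i) ^ 2; 1, -r i] = _
      rw [Matrix.adjugate_fin_two]
      norm_num
      ring
    rw [hinv]
    have h0 : (!![-r i, 1 - (r i)^2; -1, -r i] *ᵥ v.1) 0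
        = -r i * v.1 0 + (1 - (r i)^2) * v.1 1 := by
      simp [Matrix.mulVec, dotProduct, Fin.sum_univ_two]
    have h1 : (!![-r i, 1 - (r i)^2; -1, -r i] *ᵥ v.1) 1
        = -v.1 0 - r i * v.1 1 := by
      simp [Matrix.mulVec, dotProduct, Fin.sum_univ_two]
      ring
    rw [h0, h1]
    have key : -r i * v.1 0 + (1 - (r i)^2) * v.1 1 - r i * (-v.1 0 - r i * v.1 1)
        = v.1 1 := by ring
    rw [key]
    calc |v.1 1| ≤ |v.1 0 + r i * v.1 1| := le_of_lt hv'
    _ = |-v.1 0 - r i * v.1 1| := by rw [abs_sub_comm]; ring_nf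
end

section
/- The two matrices A = [[0, 1], [−1, 2]] and B = [[2, 1], [−1, 0]] in SL(2, ℤ) generate a free group of rank two: the group homomorphism from the free group on two generators to SL(2, ℤ) sending the generators to A and B respectively is injective. -/
/-!
In the coordinates `u = y - x`, `v = x + y` on `ℤ²`, the matrix `A` acts as the transvection
`(u, v) ↦ (u, v + 2u)` and `B` as `(u, v) ↦ (u - 2v, v)`: up to a change of basis over `ℚ` this
is Sanov's pair. They play ping-pong on the nonzero vectors with the sets
`X_A = {uv > u²}`, `Y_A = {uv ≤ -u²}`, `X_B = {uv < -v²}`, `Y_B = {uv ≥ v²}`.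
-/

/-- The matrix `A = [[0,1],[−1,2]]` in `SL(2,ℤ)`. -/
def matA : Matrix.SpecialLinearGroup (Fin 2) ℤ :=
  ⟨!![0, 1; -1, 2], by norm_num [Matrix.det_fin_two_of]⟩

/-- The matrix `B = [[2,1],[−1,0]]` in `SL(2,ℤ)`. -/
def matB : Matrix.SpecialLinearGroup (Fin 2) ℤ :=
  ⟨!![2, 1; -1, 0], by norm_num [Matrix.det_fin_two_of]⟩

universe u

open Function
open scoped Pointwise

/-- A point outside `Y i` is moved into `X i` by `a i`; a point of `Y i` is first moved into
some `X j`, `j ≠ i`, by `a j`. -/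
theorem FreeGroup.injective_lift_of_ping_pong_of_nonempty {ι G : Type u} {α : Type*} [Nontrivial ι]
    [Group G] [MulAction G α] [Nonempty α] (a : ι → G) (X Y : ι → Set α)
    (hXdisj : Pairwise (Disjoint on X)) (hYdisj : Pairwise (Disjoint on Y))
    (hXYdisj : ∀ i j, Disjoint (X i) (Y j)) (hX : ∀ i, a i • (Y i)ᶜ ⊆ X i)
    (hY : ∀ i, a⁻¹ i • (X i)ᶜ ⊆ Y i) : Injective (FreeGroup.lift a) := by
  refine FreeGroup.injective_lift_of_ping_pong a X Y (fun i => ?_) hXdisj hYdisj hXYdisj hX hY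
  have moves_into_X : ∀ {p}, p ∉ Y i → a i • p ∈ X i := fun hp =>
    hX i (Set.smul_mem_smul_set hp)
  obtain ⟨p⟩ := ‹Nonempty α›
  by_cases hp : p ∈ Y i
  · obtain ⟨j, hji⟩ := exists_ne i
    have hjp : a j • p ∈ X j :=
      hX j (Set.smul_mem_smul_set (Set.disjoint_left.1 (hYdisj hji.symm) hp))
    exact ⟨_, moves_into_X (Set.disjoint_left.1 (hXYdisj j i) hjp)⟩
  · exact ⟨_, moves_into_X hp⟩

lemma pairwise_disjoint_fin_two {β : Type*} [PartialOrder β] [OrderBot β] {s t : β}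
    (h : Disjoint s t) : Pairwise (Disjoint on ![s, t]) := by
  intro i j hij
  fin_cases i <;> fin_cases j <;> simp_all [onFun, h.symm]

section Shear

variable {G α : Type*} [Group G] [MulAction G α] {g : G}

lemma apply_inv_smul_of_smul_invariant {β : Type*} {u : α → β} (hu : ∀ p, u (g • p) = u p)
    (p : α) : u (g⁻¹ • p) = u p := by
  simpa using (hu (g⁻¹ • p)).symm

variable {R : Type*} [CommRing R] {u v : α → R} {l : R}

lemma apply_inv_smul_of_shear (hu : ∀ p, u (g • p) = u p)
    (hv : ∀ p, v (g • p) = v p + l * u p) (p : α) : v (g⁻¹ • p) = v p - l * u p := by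
  have h := hv (g⁻¹ • p)
  rw [smul_inv_smul, apply_inv_smul_of_smul_invariant hu] at h
  exact eq_sub_of_add_eq h.symm

variable [LinearOrder R] [IsStrictOrderedRing R]

/-- A shear `(u, v) ↦ (u, v + l u)` with `l ≥ 2` moves the slope `v / u` by `l`, so it maps
the slopes `> -1` to slopes `> 1`, and its inverse maps the slopes `≤ 1` to slopes `≤ -1`;
`u = 0` counts as slope `-∞`. -/
lemma smul_compl_subset_of_shear (hl : 2 ≤ l) (hu : ∀ p, u (g • p) = u p)
    (hv : ∀ p, v (g • p) = v p + l * u p) :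
    g • {p | u p * v p ≤ -u p ^ 2}ᶜ ⊆ {p | u p ^ 2 < u p * v p} := by
  refine Set.smul_set_subset_iff.2 fun p hp => ?_
  have : -u p ^ 2 < u p * v p := not_le.1 hp
  show u (g • p) ^ 2 < u (g • p) * v (g • p)
  rw [hu, hv]
  nlinarith [sq_nonneg (u p)]

lemma inv_smul_compl_subset_of_shear (hl : 2 ≤ l) (hu : ∀ p, u (g • p) = u p)
    (hv : ∀ p, v (g • p) = v p + l * u p) :
    g⁻¹ • {p | u p ^ 2 < u p * v p}ᶜ ⊆ {p | u p * v p ≤ -u p ^ 2} := by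
  refine Set.smul_set_subset_iff.2 fun p hp => ?_
  have : u p * v p ≤ u p ^ 2 := not_lt.1 hp
  show u (g⁻¹ • p) * v (g⁻¹ • p) ≤ -u (g⁻¹ • p) ^ 2
  rw [apply_inv_smul_of_smul_invariant hu, apply_inv_smul_of_shear hu hv]
  nlinarith [sq_nonneg (u p)]

end Shear

/-- In the coordinates `(v, -u)` the map `b` is a shear of the same kind as `a`. The sets of `a`
lie in `|u| ≤ |v|` and those of `b` in `|v| ≤ |u|`, with only one of the four sets meeting each
diagonal. -/
theorem FreeGroup.injective_lift_of_shears {G : Type} {α : Type*} [Group G] [MulAction G α] [Nonempty α]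
    {R : Type*} [CommRing R] [LinearOrder R] [IsStrictOrderedRing R] {u v : α → R} {l m : R}
    (hl : 2 ≤ l) (hm : 2 ≤ m) (huv : ∀ p, u p ≠ 0 ∨ v p ≠ 0) {a b : G}
    (hau : ∀ p, u (a • p) = u p) (hav : ∀ p, v (a • p) = v p + l * u p)
    (hbu : ∀ p, u (b • p) = u p - m * v p) (hbv : ∀ p, v (b • p) = v p) :
    Injective (FreeGroup.lift ![a, b]) := by
  have hb_shear : ∀ p, -u (b • p) = -u p + m * v p := fun p => by rw [hbu]; ring
  refine FreeGroup.injective_lift_of_ping_pong_of_nonempty _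
    ![{p | u p ^ 2 < u p * v p}, {p | v p ^ 2 < v p * -u p}]
    ![{p | u p * v p ≤ -u p ^ 2}, {p | v p * -u p ≤ -v p ^ 2}]
    (pairwise_disjoint_fin_two ?_) (pairwise_disjoint_fin_two ?_) ?_
    (Fin.forall_fin_two.2 ⟨smul_compl_subset_of_shear hl hau hav,
      smul_compl_subset_of_shear hm hbv hb_shear⟩)
    (Fin.forall_fin_two.2 ⟨inv_smul_compl_subset_of_shear hl hau hav,
      inv_smul_compl_subset_of_shear hm hbv hb_shear⟩)
  · refine Set.disjoint_left.2 fun p (hp : _ < _) (hq : _ < _) => ?_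
    nlinarith [sq_nonneg (u p), sq_nonneg (v p)]
  · refine Set.disjoint_left.2 fun p (hp : _ ≤ _) (hq : _ ≤ _) => ?_
    have hu : u p = 0 := pow_eq_zero_iff two_ne_zero |>.1 <| by
      nlinarith [sq_nonneg (u p), sq_nonneg (v p)]
    have hv : v p = 0 := pow_eq_zero_iff two_ne_zero |>.1 <| by
      nlinarith [sq_nonneg (u p), sq_nonneg (v p)]
    exact (huv p).elim (absurd hu) (absurd hv)
  · refine Fin.forall_fin_two.2 ⟨Fin.forall_fin_two.2 ⟨?_, ?_⟩, Fin.forall_fin_two.2 ⟨?_, ?_⟩⟩ <;>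
      refine Set.disjoint_left.2 fun p (hp : _ < _) (hq : _ ≤ _) => ?_ <;>
      nlinarith [sq_nonneg (u p), sq_nonneg (v p), sq_nonneg (u p - v p), sq_nonneg (u p + v p)]

def nonZeroSubMul (G M : Type*) [Group G] [AddMonoid M] [DistribMulAction G M] :
    SubMulAction G M where
  carrier := {x | x ≠ 0}
  smul_mem' g _ := (smul_ne_zero_iff_ne g).2

instance {G M : Type*} [Group G] [AddMonoid M] [Nontrivial M] [DistribMulAction G M] :
    Nonempty (nonZeroSubMul G M) :=
  let ⟨x, hx⟩ := exists_ne (0 : M)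
  ⟨⟨x, hx⟩⟩

lemma matA_smul (x : Fin 2 → ℤ) : matA • x = ![x 1, -x 0 + 2 * x 1] := by
  rw [Matrix.SpecialLinearGroup.smul_def, Matrix.smul_eq_mulVec]
  ext i
  fin_cases i <;> simp [matA, Matrix.mulVec, dotProduct, Fin.sum_univ_two]

lemma matB_smul (x : Fin 2 → ℤ) : matB • x = ![2 * x 0 + x 1, -x 0] := by
  rw [Matrix.SpecialLinearGroup.smul_def, Matrix.smul_eq_mulVec]
  ext i
  fin_cases i <;> simp [matB, Matrix.mulVec, dotProduct, Fin.sum_univ_two]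

/-- The matrices `A = [[0,1],[−1,2]]` and `B = [[2,1],[−1,0]]` generate a free group
of rank two: the homomorphism from the free group on two generators to `SL(2,ℤ)`
sending the generators to `A` and `B` is injective. -/
theorem matrices_A_B_free :
    Function.Injective
      ⇑(FreeGroup.lift (fun i : Fin 2 => if i = 0 then matA else matB)) := by
  have hgen : (fun i : Fin 2 => if i = 0 then matA else matB) = ![matA, matB] := by
    ext1 i
    fin_cases i <;> rfl
  rw [hgen]
  refine FreeGroup.injective_lift_of_shears
    (α := nonZeroSubMul (Matrix.SpecialLinearGroup (Fin 2) ℤ) (Fin 2 → ℤ))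
    (u := fun p => (p : Fin 2 → ℤ) 1 - (p : Fin 2 → ℤ) 0)
    (v := fun p => (p : Fin 2 → ℤ) 0 + (p : Fin 2 → ℤ) 1) le_rfl le_rfl ?_ ?_ ?_ ?_ ?_
  · intro p
    by_contra! h
    exact p.2 (funext (Fin.forall_fin_two.2 ⟨show (p : Fin 2 → ℤ) 0 = 0 by omega,
      show (p : Fin 2 → ℤ) 1 = 0 by omega⟩))
  all_goals
    intro p
    simp only [SetLike.val_smul, matA_smul, matB_smul, Matrix.cons_val_zero, Matrix.cons_val_one,
      Matrix.cons_val_fin_one]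
    ring
end

section
/- Every finitely generated free group is faithfully represented by a subgroup of the modular group PSL(2, ℤ): for every n ∈ ℕ there exists an injective group homomorphism from the free group of rank n into PSL(2, ℤ). -/
/-!
The matrix `M = !![2, 1; 1, 1]` acts on the rational projective line `ℚ ∪ {∞}` by
`q ↦ (2q + 1)/(q + 1)`; it maps the complement of `[-2, 0]` into `[1, 3]`, and `M⁻¹` maps the
complement of `[1, 3]` into `[-2, 0]`. Conjugating `M` by the translations `q ↦ q + 6i` moves this
pair of intervals into the pairwise disjoint windows `[6i - 2, 6i + 3]`, so by the ping-pong lemma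
the conjugates `T⁶ⁱ M T⁻⁶ⁱ`, `i ∈ ℤ`, freely generate a subgroup of `SL(2, ℤ)`. Since free
groups are torsion-free and the centre `{±1}` of `SL(2, ℤ)` is torsion, this subgroup meets the
centre trivially and hence maps isomorphically into `PSL(2, ℤ)`.
-/

open Pointwise Set

universe u

theorem FreeGroup.injective_lift_conj_of_ping_pong {ι G : Type u} {α : Type*} [Nontrivial ι]
    [Group G] [MulAction G α] (a : G) (t : ι → G) (X Y : Set α) (hXnonempty : X.Nonempty)
    (hXY : Disjoint X Y) (hX : a • Yᶜ ⊆ X) (hY : a⁻¹ • Xᶜ ⊆ Y)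
    (hdisj : Pairwise (Function.onFun Disjoint fun i => t i • (X ∪ Y))) :
    Function.Injective (FreeGroup.lift fun i => t i * a * (t i)⁻¹) := by
  have hsub : ∀ i, t i • X ⊆ t i • (X ∪ Y) ∧ t i • Y ⊆ t i • (X ∪ Y) := fun i =>
    ⟨smul_set_mono subset_union_left, smul_set_mono subset_union_right⟩
  refine FreeGroup.injective_lift_of_ping_pong _ (fun i => t i • X) (fun i => t i • Y)
    (fun _ => hXnonempty.smul_set) (fun i j hij => (hdisj hij).mono (hsub i).1 (hsub j).1)
    (fun i j hij => (hdisj hij).mono (hsub i).2 (hsub j).2) (fun i j => ?_) (fun i => ?_)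
    (fun i => ?_)
  · rcases eq_or_ne i j with rfl | hij
    · exact disjoint_smul_set.mpr hXY
    · exact (hdisj hij).mono (hsub i).1 (hsub j).2
  · rw [← smul_set_compl, smul_smul, inv_mul_cancel_right, mul_smul]
    exact smul_set_mono hX
  · simp only [Pi.inv_apply, mul_inv_rev, inv_inv]
    rw [← smul_set_compl, smul_smul, ← mul_assoc, inv_mul_cancel_right, mul_smul]
    exact smul_set_mono hY

theorem QuotientGroup.injective_mk'_comp_of_isMulTorsionFree {G H : Type*} [Group G] [IsMulTorsionFree G]
    [Group H] {φ : G →* H} (hφ : Function.Injective φ) {N : Subgroup H} [N.Normal]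
    (hN : ∀ z ∈ N, IsOfFinOrder z) : Function.Injective ((QuotientGroup.mk' N).comp φ) := by
  refine (injective_iff_map_eq_one _).mpr fun w hw => ?_
  rw [MonoidHom.comp_apply, QuotientGroup.mk'_apply, QuotientGroup.eq_one_iff] at hw
  exact (isOfFinOrder_iff_eq_one w).mp (hφ.isOfFinOrder_iff.mp (hN _ hw))

namespace Matrix.SpecialLinearGroup

variable {n R : Type*} [Fintype n] [DecidableEq n] [CommRing R]

theorem pow_card_eq_one_of_mem_center {A : SpecialLinearGroup n R}
    (hA : A ∈ Subgroup.center (SpecialLinearGroup n R)) : A ^ Fintype.card n = 1 := by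
  obtain ⟨r, hr, hrA⟩ := mem_center_iff.mp hA
  ext : 1
  rw [coe_pow, ← hrA, ← map_pow, hr, map_one, coe_one]

theorem isOfFinOrder_of_mem_center [Nonempty n] {A : SpecialLinearGroup n R}
    (hA : A ∈ Subgroup.center (SpecialLinearGroup n R)) : IsOfFinOrder A :=
  isOfFinOrder_iff_pow_eq_one.mpr ⟨_, Fintype.card_pos, pow_card_eq_one_of_mem_center hA⟩

end Matrix.SpecialLinearGroup

namespace ModularGroup

open Matrix.SpecialLinearGroup OnePoint
open scoped MatrixGroups

lemma mapGL_smul_coe (A : SL(2, ℤ)) (q : ℚ) :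
    mapGL ℚ A • (q : OnePoint ℚ) =
      if (A 1 0 : ℚ) * q + A 1 1 = 0 then ∞ else ↑((A 0 0 * q + A 0 1) / (A 1 0 * q + A 1 1)) := by
  simp [smul_some_eq_ite]

lemma mapGL_smul_infty (A : SL(2, ℤ)) :
    mapGL ℚ A • (∞ : OnePoint ℚ) = if (A 1 0 : ℚ) = 0 then ∞ else ↑((A 0 0 : ℚ) / A 1 0) := by
  simp [smul_infty_eq_ite]

lemma mapGL_T_zpow_smul_coe (m : ℤ) (q : ℚ) :
    mapGL ℚ (T ^ m) • (q : OnePoint ℚ) = ↑(q + m) := by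
  rw [mapGL_smul_coe]
  simp [coe_T_zpow]

lemma mapGL_T_zpow_smul_image (m : ℤ) (S : Set ℚ) :
    mapGL ℚ (T ^ m) • ((↑) '' S : Set (OnePoint ℚ)) = (↑) '' ((· + (m : ℚ)) '' S) := by
  rw [← image_smul, image_image, image_image]
  simp only [mapGL_T_zpow_smul_coe]

lemma pairwise_disjoint_mapGL_T_zpow_smul :
    Pairwise (Function.onFun Disjoint fun i : ℤ =>
      mapGL ℚ (T ^ (6 * i)) • ((↑) '' Icc (-2 : ℚ) 3 : Set (OnePoint ℚ))) := by
  intro i j hij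
  simp only [Function.onFun, mapGL_T_zpow_smul_image, disjoint_image_iff coe_injective,
    image_add_const_Icc, disjoint_left, mem_Icc]
  intro q hi hj
  push_cast at hi hj
  rcases hij.lt_or_gt with h | h
  · have : (i : ℚ) + 1 ≤ j := by exact_mod_cast h
    linarith
  · have : (j : ℚ) + 1 ≤ i := by exact_mod_cast h
    linarith

def pingPongMatrix : SL(2, ℤ) := ⟨!![2, 1; 1, 1], by norm_num [Matrix.det_fin_two_of]⟩

lemma coe_pingPongMatrix : (pingPongMatrix : Matrix (Fin 2) (Fin 2) ℤ) = !![2, 1; 1, 1] := rfl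

lemma mapGL_pingPongMatrix_smul_compl_subset :
    mapGL ℚ pingPongMatrix • ((↑) '' Icc (-2 : ℚ) 0 : Set (OnePoint ℚ))ᶜ ⊆
      ((↑) '' Icc (1 : ℚ) 3 : Set (OnePoint ℚ)) := by
  refine smul_set_subset_iff.mpr fun x hx => ?_
  induction x using OnePoint.rec with
  | infty =>
    rw [mapGL_smul_infty]
    exact ⟨2, by norm_num [coe_pingPongMatrix]⟩
  | coe q =>
    have hq : q < -2 ∨ 0 < q := by
      by_contra! h
      exact hx (mem_image_of_mem _ ⟨h.1, h.2⟩)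
    have hmem : (2 * q + 1) / (q + 1) ∈ Icc (1 : ℚ) 3 := by
      rcases hq with hq | hq
      · have hd : q + 1 < 0 := by linarith
        constructor
        · rw [le_div_iff_of_neg hd]; linarith
        · rw [div_le_iff_of_neg hd]; linarith
      · have hd : 0 < q + 1 := by linarith
        constructor
        · rw [le_div_iff₀ hd]; linarith
        · rw [div_le_iff₀ hd]; linarith
    have hne : q + 1 ≠ 0 := by rintro h; rcases hq with hq | hq <;> linarith
    refine ⟨_, hmem, ?_⟩
    rw [mapGL_smul_coe]
    simp [coe_pingPongMatrix, hne, add_comm]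

lemma mapGL_pingPongMatrix_inv_smul_compl_subset :
    (mapGL ℚ pingPongMatrix)⁻¹ • ((↑) '' Icc (1 : ℚ) 3 : Set (OnePoint ℚ))ᶜ ⊆
      ((↑) '' Icc (-2 : ℚ) 0 : Set (OnePoint ℚ)) := by
  rw [← map_inv]
  refine smul_set_subset_iff.mpr fun x hx => ?_
  induction x using OnePoint.rec with
  | infty =>
    rw [mapGL_smul_infty]
    exact ⟨-1, by norm_num [coe_pingPongMatrix, Matrix.adjugate_fin_two]⟩
  | coe q =>
    have hq : q < 1 ∨ 3 < q := by
      by_contra! h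
      exact hx (mem_image_of_mem _ ⟨h.1, h.2⟩)
    have hmem : (q - 1) / (2 - q) ∈ Icc (-2 : ℚ) 0 := by
      rcases hq with hq | hq
      · have hd : 0 < 2 - q := by linarith
        constructor
        · rw [le_div_iff₀ hd]; linarith
        · rw [div_le_iff₀ hd]; linarith
      · have hd : 2 - q < 0 := by linarith
        constructor
        · rw [le_div_iff_of_neg hd]; linarith
        · rw [div_le_iff_of_neg hd]; linarith
    have hne : -q + 2 ≠ 0 := by rintro h; rcases hq with hq | hq <;> linarith
    refine ⟨_, hmem, ?_⟩
    rw [mapGL_smul_coe]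
    simp only [coe_inv, coe_pingPongMatrix, Matrix.adjugate_fin_two_of]
    simp [hne]
    ring

def pingPongGen (i : ℤ) : SL(2, ℤ) := T ^ (6 * i) * pingPongMatrix * (T ^ (6 * i))⁻¹

theorem injective_lift_pingPongGen : Function.Injective (FreeGroup.lift pingPongGen) := by
  have hXY : Disjoint ((↑) '' Icc (1 : ℚ) 3 : Set (OnePoint ℚ)) ((↑) '' Icc (-2 : ℚ) 0) := by
    rw [disjoint_image_iff coe_injective, disjoint_left]
    intro q h₁ h₂
    linarith [h₁.1, h₂.2]
  have hwindow : ((↑) '' Icc (1 : ℚ) 3 ∪ (↑) '' Icc (-2 : ℚ) 0 : Set (OnePoint ℚ)) ⊆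
      (↑) '' Icc (-2 : ℚ) 3 :=
    union_subset (image_mono (Icc_subset_Icc (by norm_num) le_rfl))
      (image_mono (Icc_subset_Icc le_rfl (by norm_num)))
  have hGL := FreeGroup.injective_lift_conj_of_ping_pong (mapGL ℚ pingPongMatrix)
    (fun i : ℤ => mapGL ℚ (T ^ (6 * i))) _ _ ((nonempty_Icc.mpr (by norm_num)).image _) hXY
    mapGL_pingPongMatrix_smul_compl_subset mapGL_pingPongMatrix_inv_smul_compl_subset
    fun i j hij => (pairwise_disjoint_mapGL_T_zpow_smul hij).mono (smul_set_mono hwindow)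
      (smul_set_mono hwindow)
  have hlift : FreeGroup.lift (fun i : ℤ => mapGL ℚ (T ^ (6 * i)) * mapGL ℚ pingPongMatrix *
      (mapGL ℚ (T ^ (6 * i)))⁻¹) = (mapGL ℚ).comp (FreeGroup.lift pingPongGen) := by
    ext i
    simp [pingPongGen]
  rw [hlift, MonoidHom.coe_comp] at hGL
  exact hGL.of_comp

end ModularGroup

/-- Every finitely generated free group is faithfully represented by a subgroup of the
modular group `PSL(2,ℤ)`: for every `n` there is an injective group homomorphism from
the free group of rank `n` into `PSL(2,ℤ)`. -/
theorem freeGroup_embeds_in_PSL2Z (n : ℕ) :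
    ∃ φ : FreeGroup (Fin n) →* Matrix.ProjectiveSpecialLinearGroup (Fin 2) ℤ,
      Function.Injective ⇑φ := by
  have hmap : Function.Injective (FreeGroup.map fun i : Fin n => (i : ℤ)) :=
    FreeGroup.map_injective (Nat.cast_injective.comp Fin.val_injective)
  refine ⟨(QuotientGroup.mk' _).comp
      ((FreeGroup.lift ModularGroup.pingPongGen).comp (FreeGroup.map fun i : Fin n => (i : ℤ))),
    QuotientGroup.injective_mk'_comp_of_isMulTorsionFree ?_
      fun _ => Matrix.SpecialLinearGroup.isOfFinOrder_of_mem_center⟩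
  rw [MonoidHom.coe_comp]
  exact ModularGroup.injective_lift_pingPongGen.comp hmap
end
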